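/- Let T be a d-dimensional lattice simplex in ℝ^d with exactly one interior lattice point, with barycentric coordinates β₀,…,β_d of that point, and let I and N be disjoint subsets such that I ∪ N is a d-element subset of {0,…,d}. Let F_I = conv{p_j : j ∉ I} be the face of T defined by I. Then vol_{ℤ^d}(F_I) ≤ 1 / (|N|! · ∏_{n∈N} β_n). -/

import Mathlib

/-!
Let `a` be the vertex of `F_I` outside `N` and `n_1 < … < n_k` the elements of `N`. In the
coordinates of the lattice basis `b`, `F_I - p_a` is the image of the corner simplex
`{x ≥ 0, ∑ x ≤ 1}` under the matrix `C` whose columns are the edges `p_{n_j} - p_a`, and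
`k`-dimensional Hausdorff measure on `span b` is a multiple of Lebesgue measure in these
coordinates, normalized by the parallelepiped of `b`. Hence `vol(F_I) ≤ |det C| / k!`, and it
remains to show `|det C| ∏ β_n ≤ 1`.

If `|det C| ∏ β_n > 1`, Minkowski's theorem gives `t ∈ (-1, 1)^k` such that
`w = ∑ t_j β_{n_j} (p_{n_j} - p_a)` is a nonzero integer combination of `b`; replacing `t` by `-t` we may
assume `∑ t_j β_{n_j} ≤ 0`. Then `q + w` has barycentric coordinates `β_{n_j} (1 + t_j)` at
`n_j`, `β_a - ∑ t_j β_{n_j}` at `a` and `β_i` elsewhere, all positive, so it is a second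
interior lattice point of `T`.
-/

open MeasureTheory Set
open scoped ENNReal NNReal Pointwise

def cornerSimplex (ι : Type*) [Fintype ι] : Set (ι → ℝ) :=
  {x | (∀ i, 0 ≤ x i) ∧ ∑ i, x i ≤ 1}

theorem convex_cornerSimplex (ι : Type*) [Fintype ι] : Convex ℝ (cornerSimplex ι) := by
  rintro x ⟨hx0, hx1⟩ y ⟨hy0, hy1⟩ s t hs ht hst
  refine ⟨fun i => add_nonneg (mul_nonneg hs (hx0 i)) (mul_nonneg ht (hy0 i)), ?_⟩
  simp only [Pi.add_apply, Pi.smul_apply, smul_eq_mul, Finset.sum_add_distrib, ← Finset.mul_sum]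
  nlinarith

theorem convexHull_insert_subset_vadd_image_cornerSimplex {E κ : Type*} [AddCommGroup E]
    [Module ℝ E] [Fintype κ] [DecidableEq κ] (x : E) (A : (κ → ℝ) →ₗ[ℝ] E) :
    convexHull ℝ (insert x (range fun j => x + A (Pi.single j 1))) ⊆
      x +ᵥ A '' cornerSimplex κ := by
  refine convexHull_min (insert_subset_iff.mpr ⟨?_, ?_⟩)
    (((convex_cornerSimplex κ).linear_image A).vadd x)
  · exact ⟨0, ⟨0, ⟨fun _ => le_rfl, by simp⟩, map_zero A⟩, by simp⟩
  · rintro _ ⟨j, rfl⟩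
    refine ⟨A (Pi.single j 1), ⟨Pi.single j 1, ⟨fun i => ?_, by simp⟩, rfl⟩, rfl⟩
    by_cases h : i = j <;> simp [h]

-- Up to a null set, the `k!` sets `sortedCube k σ` tile the unit cube.
def sortedCube (k : ℕ) (σ : Equiv.Perm (Fin k)) : Set (Fin k → ℝ) :=
  {y | Monotone (y ∘ σ)} ∩ Icc 0 1

theorem isClosed_sortedCube (k : ℕ) (σ : Equiv.Perm (Fin k)) : IsClosed (sortedCube k σ) := by
  refine IsClosed.inter ?_ isClosed_Icc
  simp only [Monotone, ofPred_forall]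
  exact isClosed_iInter fun i => isClosed_iInter fun j => isClosed_iInter fun _ =>
    isClosed_le (continuous_apply _) (continuous_apply _)

theorem volume_sortedCube (k : ℕ) (σ : Equiv.Perm (Fin k)) :
    volume (sortedCube k σ) = volume (sortedCube k 1) := by
  set e := MeasurableEquiv.piCongrLeft (fun _ : Fin k => ℝ) σ.symm
  have he : ∀ y, e y = y ∘ σ := fun y => by
    ext i; simp [e, MeasurableEquiv.coe_piCongrLeft, Equiv.piCongrLeft_apply]
  have hpre : e ⁻¹' sortedCube k 1 = sortedCube k σ := by
    ext y
    simp only [sortedCube, mem_preimage, mem_inter_iff, mem_ofPred_eq, he, Equiv.Perm.coe_one,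
      Function.comp_id, mem_Icc, Pi.le_def]
    constructor
    · rintro ⟨hm, h0, h1⟩
      exact ⟨hm, fun i => by simpa using h0 (σ.symm i), fun i => by simpa using h1 (σ.symm i)⟩
    · rintro ⟨hm, h0, h1⟩
      exact ⟨hm, fun i => h0 (σ i), fun i => h1 (σ i)⟩
  rw [← hpre, (volume_measurePreserving_piCongrLeft _ σ.symm).measure_preimage
    (isClosed_sortedCube k 1).measurableSet.nullMeasurableSet]

theorem volume_setOf_apply_eq_apply {ι : Type*} [Fintype ι] [DecidableEq ι] {i j : ι}
    (hij : i ≠ j) : volume {y : ι → ℝ | y i = y j} = 0 := by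
  have : {y : ι → ℝ | y i = y j} =
      LinearMap.ker ((LinearMap.proj i : (ι → ℝ) →ₗ[ℝ] ℝ) - LinearMap.proj j) := by
    ext y; simp [sub_eq_zero]
  rw [this]
  refine Measure.addHaar_submodule _ _ fun htop => ?_
  have : (Pi.single i 1 : ι → ℝ) ∈ LinearMap.ker
      ((LinearMap.proj i : (ι → ℝ) →ₗ[ℝ] ℝ) - LinearMap.proj j) := htop ▸ trivial
  simp [hij.symm] at this

theorem eq_of_injective_of_mem_sortedCube {k : ℕ} {σ τ : Equiv.Perm (Fin k)} {y : Fin k → ℝ}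
    (hy : Function.Injective y) (hσ : y ∈ sortedCube k σ) (hτ : y ∈ sortedCube k τ) :
    σ = τ := by
  have hrange : range (y ∘ σ) = range (y ∘ τ) := by
    rw [range_comp, range_comp, Equiv.range_eq_univ, Equiv.range_eq_univ]
  have := (StrictMono.range_inj (hσ.1.strictMono_of_injective (hy.comp σ.injective))
    (hτ.1.strictMono_of_injective (hy.comp τ.injective))).mp hrange
  exact Equiv.ext fun i => hy (congrFun this i)

theorem pairwise_aedisjoint_sortedCube (k : ℕ) :
    Pairwise (Function.onFun (AEDisjoint volume) (sortedCube k)) := by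
  intro σ τ hστ
  refine measure_mono_null (t := ⋃ (i : Fin k) (j : Fin k) (_ : i ≠ j), {y | y i = y j})
    ?_ (measure_iUnion_null fun i => measure_iUnion_null fun j =>
      measure_iUnion_null fun hij => volume_setOf_apply_eq_apply hij)
  rintro y ⟨hσ, hτ⟩
  by_contra hy
  simp only [mem_iUnion, mem_ofPred_eq, not_exists] at hy
  exact hστ (eq_of_injective_of_mem_sortedCube
    (fun i j hij => by_contra fun h => hy i j h hij) hσ hτ)

theorem volume_sortedCube_le (k : ℕ) :
    volume (sortedCube k 1) ≤ (k.factorial : ℝ≥0∞)⁻¹ := by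
  have hunion :
      ∑ σ : Equiv.Perm (Fin k), volume (sortedCube k σ) = volume (⋃ σ, sortedCube k σ) :=
    (tsum_fintype _).symm.trans (measure_iUnion₀ (pairwise_aedisjoint_sortedCube k)
      fun σ => (isClosed_sortedCube k σ).measurableSet.nullMeasurableSet).symm
  have hle : volume (⋃ σ, sortedCube k σ) ≤ 1 := by
    calc volume (⋃ σ, sortedCube k σ) ≤ volume (Icc (0 : Fin k → ℝ) 1) :=
          measure_mono (iUnion_subset fun σ => inter_subset_right)
      _ = 1 := by simp [Real.volume_Icc_pi]
  simp only [volume_sortedCube k, Finset.sum_const, Finset.card_univ, Fintype.card_perm,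
    Fintype.card_fin, nsmul_eq_mul] at hunion
  rw [ENNReal.le_inv_iff_mul_le, mul_comm, hunion]
  exact hle

theorem volume_cornerSimplex_le (k : ℕ) :
    volume (cornerSimplex (Fin k)) ≤ (k.factorial : ℝ≥0∞)⁻¹ := by
  let P : Matrix (Fin k) (Fin k) ℝ := Matrix.of fun i j => if j ≤ i then 1 else 0
  have hP : ∀ x i, Matrix.toLin' P x i = ∑ j with j ≤ i, x j := fun x i => by
    simp [P, Matrix.mulVec, dotProduct, Finset.sum_filter]
  have hdet : P.det = 1 := by
    rw [Matrix.det_of_isLowerTriangular P fun i j hij => if_neg (not_le.mpr hij)]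
    simp [P]
  have hmaps : Matrix.toLin' P '' cornerSimplex (Fin k) ⊆ sortedCube k 1 := by
    rintro _ ⟨x, ⟨hx0, hx1⟩, rfl⟩
    refine ⟨fun i j hij => ?_, fun i => ?_, fun i => ?_⟩ <;> simp only [Equiv.Perm.coe_one,
      Function.comp_id, Pi.zero_apply, Pi.one_apply, hP]
    · exact Finset.sum_le_sum_of_subset_of_nonneg (Finset.monotone_filter_right _
        fun _ _ h => le_trans h hij) fun j _ _ => hx0 j
    · exact Finset.sum_nonneg fun j _ => hx0 j
    · exact le_trans (Finset.sum_le_sum_of_subset_of_nonneg (Finset.filter_subset _ _)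
        fun j _ _ => hx0 j) hx1
  calc volume (cornerSimplex (Fin k)) = volume (Matrix.toLin' P '' cornerSimplex (Fin k)) := by
        simp [Measure.addHaar_image_linearMap, LinearMap.det_toLin', hdet]
    _ ≤ (k.factorial : ℝ≥0∞)⁻¹ := (measure_mono hmaps).trans (volume_sortedCube_le k)

theorem volume_image_cornerSimplex_le {k : ℕ} (Φ : (Fin k → ℝ) →ₗ[ℝ] (Fin k → ℝ))
    {r : ℝ} (hr : 0 < r) (h : |LinearMap.det Φ| * r ≤ 1) :
    volume (Φ '' cornerSimplex (Fin k)) ≤ ENNReal.ofReal (1 / (k.factorial * r)) := by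
  have hdet : |LinearMap.det Φ| ≤ r⁻¹ := by rwa [← one_div, le_div_iff₀ hr]
  calc volume (Φ '' cornerSimplex (Fin k))
      = ENNReal.ofReal |LinearMap.det Φ| * volume (cornerSimplex (Fin k)) :=
        Measure.addHaar_image_linearMap _ _ _
    _ ≤ ENNReal.ofReal r⁻¹ * (k.factorial : ℝ≥0∞)⁻¹ :=
        mul_le_mul' (ENNReal.ofReal_le_ofReal hdet) (volume_cornerSimplex_le k)
    _ = ENNReal.ofReal (1 / (k.factorial * r)) := by
        rw [one_div, mul_inv, mul_comm, ENNReal.ofReal_mul (by positivity),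
          ENNReal.ofReal_inv_of_pos (by positivity), ENNReal.ofReal_inv_of_pos (by positivity),
          ENNReal.ofReal_natCast]

theorem exists_hausdorffMeasure_image_eq_mul_volume {E : Type*} [NormedAddCommGroup E]
    [NormedSpace ℝ E] [MeasurableSpace E] [BorelSpace E] {k : ℕ}
    (L : (Fin k → ℝ) →ₗ[ℝ] E) (hL : Function.Injective L) :
    ∃ c : ℝ≥0∞, ∀ s, μH[k] (L '' s) = c * volume s := by
  have hemb : MeasurableEmbedding L :=
    (LinearMap.isClosedEmbedding_of_injective (LinearMap.ker_eq_bot.mpr hL)).measurableEmbedding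
  let ν := Measure.comap L μH[k]
  have : ν.IsAddLeftInvariant := Measure.IsAddLeftInvariant.comap _ (f := L.toAddMonoidHom) hemb
  have : IsFiniteMeasureOnCompacts ν := ⟨fun K hK => by
    rw [hemb.comap_apply]
    calc μH[k] (L '' K) ≤ ‖L.toContinuousLinearMap‖₊ ^ (k : ℝ) * μH[k] K :=
          L.toContinuousLinearMap.lipschitz.hausdorffMeasure_image_le (by positivity) K
      _ < ⊤ := by
        have : (μH[k] : Measure (Fin k → ℝ)) = volume := by
          simpa using hausdorffMeasure_pi_real (ι := Fin k)
        rw [this]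
        exact ENNReal.mul_lt_top (by finiteness) hK.measure_lt_top⟩
  refine ⟨ν.addHaarScalarFactor volume, fun s => ?_⟩
  rw [← hemb.comap_apply]
  exact congrArg (· s) (Measure.isAddLeftInvariant_eq_smul ν volume)

theorem hausdorffMeasure_convexHull_le {E : Type*} [NormedAddCommGroup E] [NormedSpace ℝ E]
    [MeasurableSpace E] [BorelSpace E] {k : ℕ} {b : Fin k → E} (hb : LinearIndependent ℝ b)
    {x : E} {y : Fin k → E} {C : Fin k → Fin k → ℝ}
    (hC : ∀ j, Fintype.linearCombination ℝ b (C j) = y j - x) {r : ℝ} (hr : 0 < r)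
    (hdet : |LinearMap.det (Fintype.linearCombination ℝ C)| * r ≤ 1) :
    μH[k] (convexHull ℝ (insert x (range y))) ≤
      ENNReal.ofReal (1 / (k.factorial * r)) * μH[k] (parallelepiped b) := by
  set L := Fintype.linearCombination ℝ b
  set Φ := Fintype.linearCombination ℝ C
  obtain ⟨μ₀, hμ₀⟩ := exists_hausdorffMeasure_image_eq_mul_volume L
    (linearIndependent_iff_injective_fintypeLinearCombination.mp hb)
  have hsub : convexHull ℝ (insert x (range y)) ⊆ x +ᵥ (L ∘ₗ Φ) '' cornerSimplex (Fin k) := by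
    have : range y = range fun j => x + (L ∘ₗ Φ) (Pi.single j 1) := by
      congr 1; ext j; simp [Φ, Fintype.linearCombination_apply_single, hC]
    rw [this]
    exact convexHull_insert_subset_vadd_image_cornerSimplex _ _
  have hpar : parallelepiped b = L '' Icc 0 1 := by
    simp only [parallelepiped, L, ← Fintype.linearCombination_apply]
  calc μH[k] (convexHull ℝ (insert x (range y)))
      ≤ μH[k] ((L ∘ₗ Φ) '' cornerSimplex (Fin k)) :=
        (measure_mono hsub).trans_eq (hausdorffMeasure_vadd _ (Or.inl k.cast_nonneg) _)
    _ = μ₀ * volume (Φ '' cornerSimplex (Fin k)) := by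
        rw [LinearMap.coe_comp, image_comp, hμ₀]
    _ ≤ μ₀ * ENNReal.ofReal (1 / (k.factorial * r)) :=
        mul_le_mul_right (volume_image_cornerSimplex_le Φ hr hdet) _
    _ = ENNReal.ofReal (1 / (k.factorial * r)) * μH[k] (parallelepiped b) := by
        rw [mul_comm, hpar, hμ₀]
        simp [Real.volume_Icc_pi]

theorem exists_int_ne_zero_eq_image_of_one_lt_abs_det {k : ℕ}
    (Φ : (Fin k → ℝ) →ₗ[ℝ] (Fin k → ℝ)) (h : 1 < |LinearMap.det Φ|) :
    ∃ t : Fin k → ℝ, (∀ j, |t j| < 1) ∧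
      ∃ z : Fin k → ℤ, z ≠ 0 ∧ Φ t = fun j => (z j : ℝ) := by
  let B := Pi.basisFun ℝ (Fin k)
  let s := Φ '' Metric.ball 0 1
  have hsymm : ∀ x ∈ s, -x ∈ s := by
    rintro _ ⟨t, ht, rfl⟩
    exact ⟨-t, by simpa using ht, map_neg Φ t⟩
  have hvol :
      volume (ZSpan.fundamentalDomain B) * 2 ^ Module.finrank ℝ (Fin k → ℝ) < volume s := by
    rw [ZSpan.fundamentalDomain_pi_basisFun, Measure.addHaar_image_linearMap,
      Real.volume_pi_ball _ one_pos]
    simp only [volume_pi, Measure.pi_pi, Real.volume_Ico, sub_zero, ENNReal.ofReal_one,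
      Finset.prod_const_one, Module.finrank_fin_fun, mul_one, Fintype.card_fin,
      ENNReal.ofReal_pow zero_le_two, ENNReal.ofReal_ofNat]
    exact (ENNReal.mul_lt_mul_iff_left (by positivity) (by finiteness)).mpr
      ((ENNReal.one_lt_ofReal).mpr h)
  have : Countable (Submodule.span ℤ (range B)).toAddSubgroup :=
    inferInstanceAs (Countable (Submodule.span ℤ (range B)))
  obtain ⟨⟨x, hx⟩, hx0, t, ht, hΦt⟩ :=
    exists_ne_zero_mem_lattice_of_measure_mul_two_pow_lt_measure
    (ZSpan.isAddFundamentalDomain' B volume) hsymm ((convex_ball 0 1).linear_image Φ) hvol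
  obtain ⟨z, hz⟩ : ∃ z : Fin k → ℤ, x = fun j => (z j : ℝ) := by
    have := (B.mem_span_iff_repr_mem ℤ x).mp hx
    choose z hz using this
    exact ⟨z, funext fun j => by simpa [B] using (hz j).symm⟩
  refine ⟨t, fun j => by simpa using (pi_norm_lt_iff one_pos).mp (mem_ball_zero_iff.mp ht) j,
    z, ?_, hΦt.trans hz⟩
  rintro rfl
  exact hx0 (by ext; simp [hz])

section InteriorConvexHull

variable {ι E : Type*} [Fintype ι] [AddCommGroup E] [Module ℝ E] [TopologicalSpace E]
  [IsTopologicalAddGroup E] [ContinuousConstSMul ℝ E] {p : ι → E} {β : ι → ℝ}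

theorem sum_smul_mem_interior_convexHull (hβ : ∀ i, 0 ≤ β i) (hβsum : ∑ i, β i = 1)
    (hβint : ∑ i, β i • p i ∈ interior (convexHull ℝ (range p)))
    {γ : ι → ℝ} (hγ : ∀ i, 0 < γ i) (hγsum : ∑ i, γ i = 1) :
    ∑ i, γ i • p i ∈ interior (convexHull ℝ (range p)) := by
  have : Nonempty ι := by
    by_contra h
    simp [not_nonempty_iff.mp h] at hγsum
  obtain ⟨i₀, -, hi₀⟩ := Finset.univ.exists_min_image γ Finset.univ_nonempty
  set l := min (1 / 2) (γ i₀)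
  have hl0 : 0 < l := lt_min one_half_pos (hγ i₀)
  have hl1 : l < 1 := (min_le_left _ _).trans_lt one_half_lt_one
  -- `γ = l • β + (1 - l) • ρ` with convex weights `ρ`, a combination of an interior point
  -- with a point of the hull
  set ρ : ι → ℝ := fun i => (γ i - l * β i) / (1 - l)
  have hρ : ∀ i, 0 ≤ ρ i := fun i => by
    have hβ1 : β i ≤ 1 := hβsum ▸ Finset.single_le_sum (fun j _ => hβ j) (Finset.mem_univ i)
    have := (min_le_right (1 / 2) _).trans (hi₀ i (Finset.mem_univ i))
    exact div_nonneg (by nlinarith [hβ i]) (by linarith)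
  have hρsum : ∑ i, ρ i = 1 := by
    rw [← Finset.sum_div, Finset.sum_sub_distrib, ← Finset.mul_sum, hγsum, hβsum, mul_one,
      div_self (by linarith)]
  have hρmem : ∑ i, ρ i • p i ∈ convexHull ℝ (range p) :=
    (convex_convexHull ℝ _).sum_mem (fun i _ => hρ i) hρsum
      fun i _ => subset_convexHull ℝ _ (mem_range_self i)
  have hγρ : ∑ i, γ i • p i = l • ∑ i, β i • p i + (1 - l) • ∑ i, ρ i • p i := by
    have hγi : ∀ i, γ i = l * β i + (1 - l) * ρ i := fun i => by
      simp only [ρ]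
      field_simp [(by linarith : (1 : ℝ) - l ≠ 0)]
      ring
    simp only [hγi, add_smul, mul_smul, Finset.sum_add_distrib, Finset.smul_sum]
  rw [hγρ]
  exact (convex_convexHull ℝ _).combo_interior_self_mem_interior hβint hρmem hl0 (by linarith)
    (by ring)

theorem add_sum_smul_sub_mem_interior_convexHull {κ : Type*} [Fintype κ] (hβ : ∀ i, 0 < β i)
    (hβsum : ∑ i, β i = 1)
    (hβint : ∑ i, β i • p i ∈ interior (convexHull ℝ (range p)))
    {a : ι} {g : κ → ι} (hg : Function.Injective g) (hga : ∀ j, g j ≠ a)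
    (s : κ → ℝ) (hs : ∀ j, 0 < β (g j) + s j) (hsa : ∑ j, s j < β a) :
    ∑ i, β i • p i + ∑ j, s j • (p (g j) - p a) ∈ interior (convexHull ℝ (range p)) := by
  classical
  set η : ι → ℝ := ∑ j, s j • (Pi.single (g j) 1 - Pi.single a 1)
  have hη : ∑ i, η i • p i = ∑ j, s j • (p (g j) - p a) := by
    rw [← Fintype.linearCombination_apply]
    simp only [η, map_sum, map_smul, map_sub, Fintype.linearCombination_apply_single, one_smul]
  have hηsum : ∑ i, η i = 0 := by
    have := Fintype.linearCombination_apply ℝ (fun _ => (1 : ℝ)) η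
    simp only [smul_eq_mul, mul_one] at this
    rw [← this]
    simp only [η, map_sum, map_smul, map_sub, Fintype.linearCombination_apply_single, sub_self,
      smul_zero, Finset.sum_const_zero]
  have hγ : ∀ i, 0 < β i + η i := by
    intro i
    by_cases hia : i = a
    · subst hia
      simpa [η, Finset.sum_apply, hga] using hsa
    by_cases hig : ∃ j, g j = i
    · obtain ⟨j, rfl⟩ := hig
      simpa [η, Finset.sum_apply, Pi.single_apply, hga, hg.eq_iff] using hs j
    · push Not at hig
      simp [η, Finset.sum_apply, hia, hig, hβ i]
  rw [← hη, ← Finset.sum_add_distrib]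
  simp_rw [← add_smul]
  exact sum_smul_mem_interior_convexHull (fun i => (hβ i).le) hβsum hβint hγ
    (by rw [Finset.sum_add_distrib, hβsum, hηsum, add_zero])

end InteriorConvexHull

theorem exists_linearCombination_intCast_eq_intCast {ι : Type*} [Fintype ι] {d : ℕ}
    {b : ι → Fin d → ℝ} (hb : ∀ m, ∃ z : Fin d → ℤ, b m = fun j => (z j : ℝ)) (c : ι → ℤ) :
    ∃ w : Fin d → ℤ, Fintype.linearCombination ℝ b (fun m => (c m : ℝ)) = fun j => (w j : ℝ) := by
  choose z hz using hb
  exact ⟨∑ m, c m • z m, by ext; simp [Fintype.linearCombination_apply, hz]⟩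

theorem eq_zero_of_sum_smul_sub_eq_intCast {ι κ : Type*} [Fintype ι] [Fintype κ] {d : ℕ}
    {p : ι → Fin d → ℝ} {β : ι → ℝ} (hβ : ∀ i, 0 < β i) (hβsum : ∑ i, β i = 1) {q : Fin d → ℤ}
    (hq : (fun j => (q j : ℝ)) ∈ interior (convexHull ℝ (range p)))
    (huniq : ∀ q' : Fin d → ℤ,
      (fun j => (q' j : ℝ)) ∈ interior (convexHull ℝ (range p)) → q' = q)
    (hbar : ∑ i, β i • p i = fun j => (q j : ℝ))
    {a : ι} {g : κ → ι} (hg : Function.Injective g) (hga : ∀ j, g j ≠ a)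
    {s : κ → ℝ} (hs : ∀ j, 0 < β (g j) + s j) (hsa : ∑ j, s j < β a) {w : Fin d → ℤ}
    (hw : ∑ j, s j • (p (g j) - p a) = fun j => (w j : ℝ)) : w = 0 := by
  have hint := add_sum_smul_sub_mem_interior_convexHull hβ hβsum (hbar ▸ hq) hg hga s hs hsa
  have hqw : (fun j => ((q + w) j : ℝ)) = (fun j => (q j : ℝ)) + fun j => (w j : ℝ) := by
    ext; simp
  rw [hw, hbar, ← hqw] at hint
  simpa using huniq _ hint

theorem abs_det_mul_prod_le_one {ι : Type*} [Fintype ι] {d k : ℕ} {p : ι → Fin d → ℝ}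
    {β : ι → ℝ} (hβ : ∀ i, 0 < β i) (hβsum : ∑ i, β i = 1) {q : Fin d → ℤ}
    (hq : (fun j => (q j : ℝ)) ∈ interior (convexHull ℝ (range p)))
    (huniq : ∀ q' : Fin d → ℤ,
      (fun j => (q' j : ℝ)) ∈ interior (convexHull ℝ (range p)) → q' = q)
    (hbar : ∑ i, β i • p i = fun j => (q j : ℝ))
    {L : (Fin k → ℝ) →ₗ[ℝ] (Fin d → ℝ)} (hL : Function.Injective L)
    (hLint : ∀ z : Fin k → ℤ, ∃ w : Fin d → ℤ, L (fun j => (z j : ℝ)) = fun j => (w j : ℝ))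
    {a : ι} {g : Fin k → ι} (hg : Function.Injective g) (hga : ∀ j, g j ≠ a)
    {C : Fin k → Fin k → ℝ} (hC : ∀ j, L (C j) = p (g j) - p a) :
    |LinearMap.det (Fintype.linearCombination ℝ C)| * ∏ j, β (g j) ≤ 1 := by
  by_contra! hgt
  set Ψ := Fintype.linearCombination ℝ fun j => β (g j) • C j
  have hΨ :
      Ψ = Fintype.linearCombination ℝ C ∘ₗ Matrix.toLin' (Matrix.diagonal fun j => β (g j)) := by
    refine LinearMap.ext fun t => ?_
    simp [Ψ, Fintype.linearCombination_apply, Matrix.mulVec_diagonal, smul_smul, mul_comm]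
  have hdet : 1 < |LinearMap.det Ψ| := by
    rwa [hΨ, LinearMap.det_comp, LinearMap.det_toLin', Matrix.det_diagonal, abs_mul,
      abs_of_pos (Finset.prod_pos fun j _ => hβ (g j))]
  obtain ⟨t, ht, z, hz0, hΨt, hsum⟩ : ∃ t : Fin k → ℝ, (∀ j, |t j| < 1) ∧ ∃ z : Fin k → ℤ,
      z ≠ 0 ∧ Ψ t = (fun j => (z j : ℝ)) ∧ ∑ j, β (g j) * t j ≤ 0 := by
    obtain ⟨t, ht, z, hz0, hΨt⟩ := exists_int_ne_zero_eq_image_of_one_lt_abs_det Ψ hdet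
    rcases le_total (∑ j, β (g j) * t j) 0 with h | h
    · exact ⟨t, ht, z, hz0, hΨt, h⟩
    · refine ⟨-t, by simpa using ht, -z, neg_ne_zero.mpr hz0, ?_, ?_⟩
      · rw [map_neg, hΨt]; ext; simp
      · simpa using h
  obtain ⟨w, hw⟩ := hLint z
  have hLΨ : L (Ψ t) = ∑ j, (β (g j) * t j) • (p (g j) - p a) := by
    simp only [Ψ, Fintype.linearCombination_apply, map_sum, map_smul, hC, smul_smul, mul_comm]
  have hw0 : w = 0 := eq_zero_of_sum_smul_sub_eq_intCast hβ hβsum hq huniq hbar hg hga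
    (fun j => by nlinarith [abs_lt.mp (ht j), hβ (g j)]) (hsum.trans_lt (hβ a))
    (by rw [← hLΨ, hΨt, hw])
  have hLz : L (fun j => (z j : ℝ)) = 0 := by rw [hw, hw0]; ext; simp
  exact hz0 (funext fun j => by simpa using congrFun ((map_eq_zero_iff L hL).mp hLz) j)

theorem exists_compl_eq_insert {α : Type*} [Fintype α] [DecidableEq α] {I N : Finset α}
    (hdisj : Disjoint I N) (hcard : (I ∪ N).card + 1 = Fintype.card α) :
    ∃ a ∉ N, {i | i ∉ I} = insert a (N : Set α) := by
  obtain ⟨a, ha⟩ :=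
    Finset.card_eq_one.mp (by rw [Finset.card_compl]; omega : (I ∪ N)ᶜ.card = 1)
  have hmem : ∀ i, i ∉ I ∪ N ↔ i = a := fun i => by
    rw [← Finset.mem_compl, ha, Finset.mem_singleton]
  refine ⟨a, fun h => (hmem a).mpr rfl (Finset.mem_union_right _ h), ?_⟩
  ext i
  simp only [mem_ofPred_eq, mem_insert_iff, Finset.mem_coe]
  constructor
  · intro hi
    by_cases hiN : i ∈ N
    · exact Or.inr hiN
    · exact Or.inl ((hmem i).mp (by simp [hi, hiN]))
  · rintro (rfl | hiN)
    · exact fun h => (hmem i).mpr rfl (Finset.mem_union_left _ h)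
    · exact Finset.disjoint_right.mp hdisj hiN

theorem exists_apex_and_enumeration {α : Type*} [Fintype α] [LinearOrder α] {I N : Finset α}
    {k : ℕ} (hdisj : Disjoint I N) (hcard : (I ∪ N).card + 1 = Fintype.card α)
    (hNk : N.card = k) :
    ∃ a, ∃ g : Fin k ↪ α, (∀ j, g j ≠ a) ∧ Finset.univ.map g = N ∧
      {i | i ∉ I} = insert a (range g) := by
  obtain ⟨a, haN, hvert⟩ := exists_compl_eq_insert hdisj hcard
  refine ⟨a, (N.orderEmbOfFin hNk).toEmbedding, fun j h => haN (h ▸ N.orderEmbOfFin_mem hNk j),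
    N.map_orderEmbOfFin_univ hNk, ?_⟩
  rw [hvert, RelEmbedding.coe_toEmbedding, N.range_orderEmbOfFin hNk]

theorem stmt12_general (d : ℕ) (v : Fin (d + 1) → Fin d → ℤ)
    (q : Fin d → ℤ)
    (hq : (fun j => ((q j : ℤ) : ℝ)) ∈
      interior (convexHull ℝ (Set.range (fun i => fun j => ((v i j : ℤ) : ℝ)))))
    (huniq : ∀ q' : Fin d → ℤ,
      (fun j => ((q' j : ℤ) : ℝ)) ∈
        interior (convexHull ℝ (Set.range (fun i => fun j => ((v i j : ℤ) : ℝ)))) → q' = q)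
    (β : Fin (d + 1) → ℝ) (hβpos : ∀ i, 0 < β i) (hβsum : ∑ i, β i = 1)
    (hbar : (∑ i, β i • (fun j => ((v i j : ℤ) : ℝ))) = fun j => ((q j : ℤ) : ℝ))
    (I N : Finset (Fin (d + 1))) (hdisj : Disjoint I N) (hcard : (I ∪ N).card = d)
    (F : Set (Fin d → ℝ))
    (hF : F = convexHull ℝ ((fun i => fun j => ((v i j : ℤ) : ℝ)) '' {i | i ∉ I}))
    (k : ℕ) (hk : k = d - I.card) :
    ∀ b : Fin k → (Fin d → ℝ),
      Submodule.span ℝ (Set.range b) = vectorSpan ℝ F →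
      LinearIndependent ℝ b →
      (∀ m, ∃ z : Fin d → ℤ, b m = fun j => ((z j : ℤ) : ℝ)) →
      (∀ z : Fin d → ℤ,
        (fun j => ((z j : ℤ) : ℝ)) ∈ Submodule.span ℝ (Set.range b) →
          ∃ c : Fin k → ℤ, (fun j => ((z j : ℤ) : ℝ)) = ∑ m, (c m : ℝ) • b m) →
      μH[(k : ℝ)] F ≤
        ENNReal.ofReal (1 / ((N.card.factorial : ℝ) * ∏ n ∈ N, β n)) *
          μH[(k : ℝ)] (parallelepiped b) := by
  intro b hspan hlin hbint _
  set p : Fin (d + 1) → Fin d → ℝ := fun i j => (v i j : ℝ)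
  have hNk : N.card = k := by
    have := Finset.card_union_of_disjoint hdisj
    omega
  obtain ⟨a, g, hga, hgN, hvert⟩ :=
    exists_apex_and_enumeration hdisj (by rw [hcard, Fintype.card_fin]) hNk
  have hvert' : p '' {i | i ∉ I} = insert (p a) (range (p ∘ g)) := by
    rw [hvert, image_insert_eq, range_comp]
  obtain ⟨C, hC⟩ : ∃ C : Fin k → Fin k → ℝ,
      ∀ j, Fintype.linearCombination ℝ b (C j) = p (g j) - p a := by
    have hmem : ∀ j, p (g j) - p a ∈ Submodule.span ℝ (range b) := fun j => by
      rw [hspan, hF, ← direction_affineSpan, affineSpan_convexHull, direction_affineSpan, hvert']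
      exact vsub_mem_vectorSpan ℝ (mem_insert_of_mem _ (mem_range_self j)) (mem_insert _ _)
    choose C hC using fun j => (Submodule.mem_span_range_iff_exists_fun ℝ).mp (hmem j)
    exact ⟨C, hC⟩
  rw [hF, hvert', hNk, ← hgN, Finset.prod_map]
  exact hausdorffMeasure_convexHull_le hlin hC (Finset.prod_pos fun j _ => hβpos _)
    (abs_det_mul_prod_le_one hβpos hβsum hq huniq hbar
      (linearIndependent_iff_injective_fintypeLinearCombination.mp hlin)
      (exists_linearCombination_intCast_eq_intCast hbint) g.injective hga hC)

/-- Theorem 4: for a lattice `d`-simplex with exactly one interior lattice point and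
disjoint `I, N` with `|I ∪ N| = d`, the normalized volume of the face `F_I` satisfies
`vol_{ℤ^d}(F_I) ≤ 1/(|N|! ∏_{n∈N} β_n)`.  Normalized volume is expressed via any
lattice basis `b` of `ℤ^d ∩ lin(F_I - F_I)`: the `k`-dimensional Hausdorff measure of
`F_I` divided by that of the fundamental parallelepiped of `b`, where `k = d - |I|`. -/
theorem stmt12 (d : ℕ) (v : Fin (d + 1) → Fin d → ℤ)
    (hind : AffineIndependent ℝ (fun i => fun j => ((v i j : ℤ) : ℝ)))
    (q : Fin d → ℤ)
    (hq : (fun j => ((q j : ℤ) : ℝ)) ∈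
      interior (convexHull ℝ (Set.range (fun i => fun j => ((v i j : ℤ) : ℝ)))))
    (huniq : ∀ q' : Fin d → ℤ,
      (fun j => ((q' j : ℤ) : ℝ)) ∈
        interior (convexHull ℝ (Set.range (fun i => fun j => ((v i j : ℤ) : ℝ)))) → q' = q)
    (β : Fin (d + 1) → ℝ) (hβpos : ∀ i, 0 < β i) (hβsum : ∑ i, β i = 1)
    (hbar : (∑ i, β i • (fun j => ((v i j : ℤ) : ℝ))) = fun j => ((q j : ℤ) : ℝ))
    (I N : Finset (Fin (d + 1))) (hdisj : Disjoint I N) (hcard : (I ∪ N).card = d)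
    (F : Set (Fin d → ℝ))
    (hF : F = convexHull ℝ ((fun i => fun j => ((v i j : ℤ) : ℝ)) '' {i | i ∉ I}))
    (k : ℕ) (hk : k = d - I.card) :
    ∀ b : Fin k → (Fin d → ℝ),
      Submodule.span ℝ (Set.range b) = vectorSpan ℝ F →
      LinearIndependent ℝ b →
      (∀ m, ∃ z : Fin d → ℤ, b m = fun j => ((z j : ℤ) : ℝ)) →
      (∀ z : Fin d → ℤ,
        (fun j => ((z j : ℤ) : ℝ)) ∈ Submodule.span ℝ (Set.range b) →
          ∃ c : Fin k → ℤ, (fun j => ((z j : ℤ) : ℝ)) = ∑ m, (c m : ℝ) • b m) →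
      μH[(k : ℝ)] F ≤
        ENNReal.ofReal (1 / ((N.card.factorial : ℝ) * ∏ n ∈ N, β n)) *
          μH[(k : ℝ)] (parallelepiped b) :=
  stmt12_general d v q hq huniq β hβpos hβsum hbar I N hdisj hcard F hF k hk
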